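/- arXiv:0808.2474 — 6 statements merged into one kernel-verified Lean document; each statement's English description precedes it below -/
import Mathlib

section
/- (Lieb-Robinson bound for banded matrices.) Let B be a Hermitian matrix and H a Hermitian matrix with ‖H‖ ≤ 1 such that ⟨v₁, H v₂⟩ = 0 whenever v₁, v₂ are eigenvectors of B with eigenvalues x₁, x₂ satisfying |x₁ - x₂| ≥ Δ. Let S₁, S₂ ⊆ ℝ be sets, let v be a vector in the span of eigenvectors of B with eigenvalues in S₁, and let P(S₂,B) be the orthogonal projection onto the span of eigenvectors of B with eigenvalues in S₂. Then for all t with |t| ≤ dist(S₁,S₂)/(e²Δ), we have |P(S₂,B) exp(-iHt) v| ≤ e^{-dist(S₁,S₂)/Δ} · |v|. -/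
open scoped Nat

lemma aux_pow_fact (n : ℕ) (hn : 1 ≤ n) : (n : ℝ) ^ n ≤ Real.exp (n - 1) * n ! := by
  induction n with
  | zero => omega
  | succ m ih =>
    rcases Nat.eq_or_lt_of_le hn with h | h
    · simp [← h]
    · have hm : 1 ≤ m := by omega
      have ihm := ih hm
      have hm0 : (0:ℝ) < m := by positivity
      have key : ((m:ℝ) + 1) ^ m ≤ (m:ℝ) ^ m * Real.exp 1 := by
        have h1 : (m:ℝ) + 1 ≤ (m:ℝ) * Real.exp (1 / m) := by
          have := Real.add_one_le_exp (1 / (m:ℝ))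
          calc (m:ℝ) + 1 = (m:ℝ) * (1/(m:ℝ) + 1) := by field_simp; ring
            _ ≤ (m:ℝ) * Real.exp (1/(m:ℝ)) := by
                apply mul_le_mul_of_nonneg_left _ (le_of_lt hm0)
                linarith
        calc ((m:ℝ) + 1) ^ m ≤ ((m:ℝ) * Real.exp (1 / m)) ^ m := by
              apply pow_le_pow_left₀ (by positivity) h1
          _ = (m:ℝ) ^ m * Real.exp (1/m) ^ m := mul_pow _ _ _
          _ = (m:ℝ) ^ m * Real.exp 1 := by
              rw [← Real.exp_nat_mul]
              congr 1
              field_simp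
      have : ((m:ℝ) + 1) ^ (m + 1) = ((m:ℝ)+1) * ((m:ℝ)+1) ^ m := by ring
      push_cast
      rw [this]
      calc ((m:ℝ)+1) * ((m:ℝ)+1) ^ m ≤ ((m:ℝ)+1) * ((m:ℝ) ^ m * Real.exp 1) := by
            apply mul_le_mul_of_nonneg_left key (by positivity)
        _ ≤ ((m:ℝ)+1) * (Real.exp ((m:ℝ) - 1) * (m ! : ℝ) * Real.exp 1) := by
            apply mul_le_mul_of_nonneg_left _ (by positivity)
            apply mul_le_mul_of_nonneg_right ihm (Real.exp_pos 1).le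
        _ = Real.exp ((m:ℝ) + 1 - 1) * ((m+1) * (m ! : ℝ)) := by
            rw [show ((m:ℝ) + 1 - 1) = ((m:ℝ) - 1) + 1 by ring, Real.exp_add]
            ring
        _ = Real.exp ((m:ℝ)+1-1) * ((m+1)! : ℝ) := by
            rw [Nat.factorial_succ]
            push_cast
            ring

lemma aux_apow (a : ℝ) (n : ℕ) (ha : 0 < a) (han : a ≤ n) :
    a ^ n ≤ (n:ℝ) ^ n * Real.exp (a - n) := by
  have hn0 : (0:ℝ) < n := lt_of_lt_of_le ha han
  have h1 : a ≤ (n:ℝ) * Real.exp (a / n - 1) := by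
    have := Real.add_one_le_exp (a / (n:ℝ) - 1)
    calc a = (n:ℝ) * (a/(n:ℝ) - 1 + 1) := by field_simp; ring
      _ ≤ (n:ℝ) * Real.exp (a/(n:ℝ) - 1) := by
          apply mul_le_mul_of_nonneg_left this hn0.le
  calc a ^ n ≤ ((n:ℝ) * Real.exp (a / n - 1)) ^ n := pow_le_pow_left₀ ha.le h1 n
    _ = (n:ℝ) ^ n * (Real.exp (a/n - 1)) ^ n := mul_pow _ _ _
    _ = (n:ℝ) ^ n * Real.exp (a - n) := by
        rw [← Real.exp_nat_mul]
        congr 1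
        field_simp

lemma aux_term (a : ℝ) (n : ℕ) (ha : 0 < a) (han : a ≤ n) (hn : 1 ≤ n) :
    (a / Real.exp 1 ^ 2) ^ n / (n ! : ℝ) ≤ Real.exp (a - 2 * n - 1) := by
  have hfac : (0:ℝ) < n ! := by positivity
  have key : a ^ n ≤ Real.exp (a - 1) * (n ! : ℝ) := by
    calc a ^ n ≤ (n:ℝ) ^ n * Real.exp (a - n) := aux_apow a n ha han
      _ ≤ (Real.exp ((n:ℝ) - 1) * n !) * Real.exp (a - n) := by
          apply mul_le_mul_of_nonneg_right (aux_pow_fact n hn) (Real.exp_pos _).le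
      _ = Real.exp (a - 1) * (n ! : ℝ) := by
          rw [mul_right_comm, ← Real.exp_add]
          ring_nf
  have he : (Real.exp 1 ^ 2) ^ n = Real.exp (2 * n) := by
    rw [show Real.exp 1 ^ 2 = Real.exp 2 by rw [← Real.exp_nat_mul]; norm_num,
      ← Real.exp_nat_mul]
    ring_nf
  rw [div_pow, div_div, div_le_iff₀ (by positivity)]
  calc a ^ n ≤ Real.exp (a - 1) * (n ! : ℝ) := key
    _ = Real.exp (a - 2*n - 1) * ((Real.exp 1 ^ 2) ^ n * (n ! : ℝ)) := by
        rw [he, ← mul_assoc, ← Real.exp_add]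
        ring_nf

lemma aux_geom (a : ℝ) (n₀ : ℕ) (h : a ≤ n₀) :
    ∑' k : ℕ, Real.exp (a - 2 * ((k : ℝ) + n₀) - 1) ≤ Real.exp (-a) := by
  have h2 : Real.exp (-2) < 1 := by
    rw [Real.exp_lt_one_iff]; norm_num
  have h2' : (0:ℝ) ≤ Real.exp (-2) := (Real.exp_pos _).le
  have heq : ∀ k : ℕ, Real.exp (a - 2 * ((k : ℝ) + n₀) - 1)
      = Real.exp (a - 2 * n₀ - 1) * Real.exp (-2) ^ k := by
    intro k
    rw [← Real.exp_nat_mul, ← Real.exp_add]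
    ring_nf
  rw [tsum_congr heq, tsum_mul_left, tsum_geometric_of_lt_one h2' h2]
  have hle : Real.exp (a - 2 * n₀ - 1) ≤ Real.exp (-a - 1) := by
    apply Real.exp_le_exp.mpr; linarith
  have hpos : (0:ℝ) < 1 - Real.exp (-2) := by linarith
  rw [mul_inv_le_iff₀ hpos]
  calc Real.exp (a - 2*n₀ - 1) ≤ Real.exp (-a - 1) := hle
    _ = Real.exp (-a) * Real.exp (-1) := by rw [← Real.exp_add]; ring_nf
    _ ≤ Real.exp (-a) * (1 - Real.exp (-2)) := by
        apply mul_le_mul_of_nonneg_left _ (Real.exp_pos _).le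
        have e1 : (2.7182818283 : ℝ) < Real.exp 1 := Real.exp_one_gt_d9
        have : Real.exp (-1) = (Real.exp 1)⁻¹ := by rw [Real.exp_neg]
        have h22 : Real.exp (-2) = ((Real.exp 1)^2)⁻¹ := by
          rw [Real.exp_neg]
          congr 1
          rw [← Real.exp_nat_mul]; norm_num
        rw [this, h22]
        have hx : (0:ℝ) < Real.exp 1 := Real.exp_pos 1
        have a1 : (Real.exp 1)⁻¹ ≤ (2.7:ℝ)⁻¹ :=
          inv_anti₀ (by norm_num) (by linarith)
        have a2 : (Real.exp 1 ^ 2)⁻¹ ≤ ((2.7:ℝ)^2)⁻¹ :=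
          inv_anti₀ (by norm_num) (by nlinarith)
        have : (2.7:ℝ)⁻¹ + ((2.7:ℝ)^2)⁻¹ ≤ 1 := by norm_num
        linarith

open MeasureTheory ContinuousLinearMap
open scoped InnerProductSpace

open MeasureTheory ContinuousLinearMap
open scoped InnerProductSpace

set_option maxHeartbeats 1000000 in
/-- Theorem 4 (Lieb-Robinson bound for banded matrices), Hastings: if `H` is Hermitian
with `‖H‖ ≤ 1` and has no matrix elements between eigenvectors of `B` whose eigenvalues
differ by at least `Δ`, then for a vector `v` supported (for `B`) on `S₁` and the
projection `P` onto eigenvectors of `B` with eigenvalues in `S₂`, for all times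
`|t| ≤ dist(S₁,S₂)/(e²Δ)` one has `‖P exp(-iHt) v‖ ≤ exp(-dist(S₁,S₂)/Δ) ‖v‖`. -/
theorem stmt2 (N : ℕ) (B H : EuclideanSpace ℂ (Fin N) →L[ℂ] EuclideanSpace ℂ (Fin N))
    (hB : IsSelfAdjoint B) (hH : IsSelfAdjoint H) (hHnorm : ‖H‖ ≤ 1)
    (Δ : ℝ) (hΔ : 0 < Δ)
    (hband : ∀ (v₁ v₂ : EuclideanSpace ℂ (Fin N)) (x₁ x₂ : ℝ),
      B v₁ = (x₁ : ℂ) • v₁ → B v₂ = (x₂ : ℂ) • v₂ → Δ ≤ |x₁ - x₂| → ⟪v₁, H v₂⟫_ℂ = 0)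
    (S₁ S₂ : Set ℝ) (d : ℝ)
    (hd : ∀ x₁ ∈ S₁, ∀ x₂ ∈ S₂, d ≤ |x₁ - x₂|)
    (v : EuclideanSpace ℂ (Fin N))
    (hv : v ∈ Submodule.span ℂ
      {w : EuclideanSpace ℂ (Fin N) | ∃ x ∈ S₁, B w = (x : ℂ) • w}) :
    ∀ t : ℝ, |t| ≤ d / (Real.exp 1 ^ 2 * Δ) →
      ‖(Submodule.orthogonalProjectionOnto (Submodule.span ℂ
          {w : EuclideanSpace ℂ (Fin N) | ∃ x ∈ S₂, B w = (x : ℂ) • w})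
          ((NormedSpace.exp ((-(Complex.I * (t : ℂ))) • H)) v) :
          EuclideanSpace ℂ (Fin N))‖ ≤ Real.exp (-(d / Δ)) * ‖v‖ := by
    classical
  intro t ht
  set K₂ := Submodule.span ℂ
      {w : EuclideanSpace ℂ (Fin N) | ∃ x ∈ S₂, B w = (x : ℂ) • w} with hK₂
  have hee : (0:ℝ) < Real.exp 1 ^ 2 := by positivity
  have hΔe : (0:ℝ) < Real.exp 1 ^ 2 * Δ := by positivity
  have hd0 : 0 ≤ d := by
    have h0 : (0:ℝ) ≤ d / (Real.exp 1 ^ 2 * Δ) := le_trans (abs_nonneg t) ht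
    by_contra hc
    push_neg at hc
    have : d / (Real.exp 1 ^ 2 * Δ) < 0 := div_neg_of_neg_of_pos hc hΔe
    linarith
  have hPnorm : ∀ u : EuclideanSpace ℂ (Fin N),
      ‖(Submodule.orthogonalProjectionOnto K₂ u : EuclideanSpace ℂ (Fin N))‖ ≤ ‖u‖ := by
    intro u
    calc ‖(Submodule.orthogonalProjectionOnto K₂ u : EuclideanSpace ℂ (Fin N))‖
        = ‖Submodule.orthogonalProjectionOnto K₂ u‖ := rfl
      _ ≤ ‖Submodule.orthogonalProjectionOnto K₂‖ * ‖u‖ := le_opNorm _ _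
      _ ≤ 1 * ‖u‖ := by
          apply mul_le_mul_of_nonneg_right (Submodule.orthogonalProjectionOnto_norm_le K₂) (norm_nonneg u)
      _ = ‖u‖ := one_mul _
  rcases eq_or_lt_of_le hd0 with hdz | hdpos
  · -- d = 0, so t = 0
    have ht0 : t = 0 := by
      have : d / (Real.exp 1 ^ 2 * Δ) = 0 := by rw [← hdz]; simp
      rw [this] at ht
      exact abs_eq_zero.mp (le_antisymm ht (abs_nonneg t))
    subst ht0
    have : ((-(Complex.I * ((0:ℝ) : ℂ))) • H) = 0 := by
      ext w
      simp
    rw [this, NormedSpace.exp_zero, ContinuousLinearMap.one_apply]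
    have h1 : (1:ℝ) ≤ Real.exp (-(d / Δ)) := by
      rw [← hdz]
      simp
    calc ‖(Submodule.orthogonalProjectionOnto K₂ v : EuclideanSpace ℂ (Fin N))‖ ≤ ‖v‖ := hPnorm v
      _ = 1 * ‖v‖ := (one_mul _).symm
      _ ≤ Real.exp (-(d / Δ)) * ‖v‖ := by
          apply mul_le_mul_of_nonneg_right h1 (norm_nonneg v)
  -- main case : 0 < d
  have hBsym : (↑B : EuclideanSpace ℂ (Fin N) →ₗ[ℂ] EuclideanSpace ℂ (Fin N)).IsSymmetric :=
    ContinuousLinearMap.isSelfAdjoint_iff_isSymmetric.mp hB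
  set b := hBsym.eigenvectorBasis finrank_euclideanSpace_fin with hbdef
  set μ := hBsym.eigenvalues finrank_euclideanSpace_fin with hμdef
  have hbB : ∀ i, B (b i) = ((μ i : ℝ) : ℂ) • b i := fun i =>
    hBsym.apply_eigenvectorBasis finrank_euclideanSpace_fin i
  -- coefficient of eigenvector
  have hcoeff : ∀ (w : EuclideanSpace ℂ (Fin N)) (x : ℝ), B w = (x : ℂ) • w →
      ∀ j, ⟪b j, w⟫_ℂ ≠ 0 → μ j = x := by
    intro w x hw j hj
    have h1 : ⟪b j, B w⟫_ℂ = (x : ℂ) * ⟪b j, w⟫_ℂ := by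
      rw [hw, inner_smul_right]
    have h2 : ⟪b j, B w⟫_ℂ = ((μ j : ℝ) : ℂ) * ⟪b j, w⟫_ℂ := by
      have h2' := hBsym (b j) w
      simp only [ContinuousLinearMap.coe_coe] at h2'
      rw [← h2', hbB j, inner_smul_left, Complex.conj_ofReal]
    have h3 : ((μ j : ℝ) : ℂ) = (x : ℂ) :=
      mul_right_cancel₀ hj (h2.symm.trans h1)
    exact_mod_cast h3
  -- support propagation
  have hsupp : ∀ n : ℕ, ∀ j, (∃ x ∈ S₂, |μ j - x| < d - n * Δ) →
      ⟪b j, (H ^ n) v⟫_ℂ = 0 := by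
    intro n
    induction n with
    | zero =>
      intro j ⟨x₂, hx₂, hlt⟩
      simp only [pow_zero, ContinuousLinearMap.one_apply]
      induction hv using Submodule.span_induction with
      | mem w hw =>
        obtain ⟨x₁, hx₁, hwx⟩ := hw
        by_contra hc
        have hμ : μ j = x₁ := hcoeff w x₁ hwx j hc
        have := hd x₁ hx₁ x₂ hx₂
        rw [← hμ] at this
        simp only [Nat.cast_zero, zero_mul, sub_zero] at hlt
        linarith
      | zero => simp
      | add w₁ w₂ h₁ h₂ ih₁ ih₂ => rw [inner_add_right, ih₁, ih₂, add_zero]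
      | smul c w hw ih => rw [inner_smul_right, ih, mul_zero]
    | succ n ih =>
      intro j ⟨x₂, hx₂, hlt⟩
      have hHn : (H ^ (n+1)) v = H ((H ^ n) v) := by
        rw [pow_succ']
        rfl
      rw [hHn]
      set u := (H ^ n) v with hu
      rw [← OrthonormalBasis.sum_repr' b u, map_sum, inner_sum]
      apply Finset.sum_eq_zero
      intro i _
      rw [ContinuousLinearMap.map_smul, inner_smul_right]
      by_cases hi : ∃ x ∈ S₂, |μ i - x| < d - n * Δ
      · rw [ih i hi, zero_mul]
      · push_neg at hi
        have h1 : d - n * Δ ≤ |μ i - x₂| := hi x₂ hx₂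
        have hdist : Δ ≤ |μ j - μ i| := by
          have h3 : |μ i - x₂| - |μ j - x₂| ≤ |μ i - μ j| := by
            have := abs_sub_abs_le_abs_sub (μ i - x₂) (μ j - x₂)
            have h4 : (μ i - x₂) - (μ j - x₂) = μ i - μ j := by ring
            rw [h4] at this
            exact this
          rw [abs_sub_comm]
          push_cast at hlt ⊢
          nlinarith [abs_nonneg (μ i - μ j)]
        rw [hband (b j) (b i) (μ j) (μ i) (hbB j) (hbB i) hdist, mul_zero]
  have hS2 : ∀ n : ℕ, (n : ℝ) * Δ < d → ∀ j, μ j ∈ S₂ → ⟪b j, (H ^ n) v⟫_ℂ = 0 := by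
    intro n hn j hj
    apply hsupp n j
    exact ⟨μ j, hj, by simp; linarith⟩
  set n₀ := ⌈d / Δ⌉₊ with hn₀def
  have hn₀1 : 1 ≤ n₀ := Nat.ceil_pos.mpr (div_pos hdpos hΔ)
  have han₀ : d / Δ ≤ (n₀ : ℝ) := Nat.le_ceil _
  set A := (-(Complex.I * (t : ℂ))) • H with hA
  have hAnorm : ‖A‖ ≤ d / Δ / Real.exp 1 ^ 2 := by
    have h1 : ‖A‖ = ‖(-(Complex.I * (t : ℂ)))‖ * ‖H‖ := by
      rw [hA]; exact norm_smul (-(Complex.I * (t : ℂ))) H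
    have h2 : ‖(-(Complex.I * (t : ℂ)))‖ = |t| := by
      rw [norm_neg, norm_mul, Complex.norm_I, one_mul, Complex.norm_real, Real.norm_eq_abs]
    have h3 : d / (Real.exp 1 ^ 2 * Δ) = d / Δ / Real.exp 1 ^ 2 := by
      rw [div_div]
      ring_nf
    calc ‖A‖ = |t| * ‖H‖ := by rw [h1, h2]
      _ ≤ |t| * 1 := mul_le_mul_of_nonneg_left hHnorm (abs_nonneg t)
      _ = |t| := mul_one _
      _ ≤ d / Δ / Real.exp 1 ^ 2 := by rw [← h3]; exact ht
  have hA0 : (0:ℝ) ≤ ‖A‖ := norm_nonneg A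
  set f : ℕ → (EuclideanSpace ℂ (Fin N) →L[ℂ] EuclideanSpace ℂ (Fin N)) :=
    fun n => (n !⁻¹ : ℂ) • A ^ n with hf
  have hsumf : Summable f := NormedSpace.expSeries_summable' A
  have hexp : NormedSpace.exp A = (∑ n ∈ Finset.range n₀, f n) + ∑' k, f (k + n₀) := by
    rw [NormedSpace.exp_eq_tsum ℂ]
    exact (Summable.sum_add_tsum_nat_add n₀ hsumf).symm
  have hFzero : ∀ j, μ j ∈ S₂ → ⟪b j, (∑ n ∈ Finset.range n₀, f n) v⟫_ℂ = 0 := by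
    intro j hj
    rw [ContinuousLinearMap.sum_apply, inner_sum]
    apply Finset.sum_eq_zero
    intro n hn
    have hnlt : (n : ℝ) * Δ < d := by
      have hlt : (n : ℝ) < d / Δ := Nat.lt_ceil.mp (Finset.mem_range.mp hn)
      calc (n:ℝ) * Δ < (d / Δ) * Δ := mul_lt_mul_of_pos_right hlt hΔ
        _ = d := div_mul_cancel₀ d hΔ.ne'
    have hApow : A ^ n = ((-(Complex.I * (t:ℂ))) ^ n) • H ^ n := smul_pow _ _ _
    rw [hf]
    simp only [ContinuousLinearMap.smul_apply, inner_smul_right, hApow]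
    rw [hS2 n hnlt j hj, mul_zero, mul_zero]
  have hFmem : (∑ n ∈ Finset.range n₀, f n) v ∈ K₂ᗮ := by
    rw [Submodule.mem_orthogonal]
    intro w hw
    induction hw using Submodule.span_induction with
    | mem w hw =>
      obtain ⟨x, hx, hwx⟩ := hw
      rw [← OrthonormalBasis.sum_repr' b w, sum_inner]
      apply Finset.sum_eq_zero
      intro j _
      rw [inner_smul_left]
      by_cases hj : ⟪b j, w⟫_ℂ = 0
      · rw [hj]
        simp
      · have hμx : μ j = x := hcoeff w x hwx j hj
        rw [hFzero j (hμx ▸ hx), mul_zero]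
    | zero => rw [inner_zero_left]
    | add w₁ w₂ h1 h2 ih1 ih2 => rw [inner_add_left, ih1, ih2, add_zero]
    | smul c w h ihw => rw [inner_smul_left, ihw, mul_zero]
  have hP0 : Submodule.orthogonalProjectionOnto K₂ ((∑ n ∈ Finset.range n₀, f n) v) = 0 :=
    Submodule.orthogonalProjectionOnto_apply_of_mem_orthogonal hFmem
  have hterm : ∀ k : ℕ, ‖f (k + n₀)‖ ≤ Real.exp (d/Δ - 2 * ((k:ℝ) + n₀) - 1) := by
    intro k
    have hn1 : 1 ≤ k + n₀ := by omega
    have han : d / Δ ≤ ((k + n₀ : ℕ) : ℝ) := by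
      refine le_trans han₀ ?_
      exact_mod_cast Nat.le_add_left n₀ k
    have h1 : ‖f (k + n₀)‖ ≤ ‖A‖ ^ (k + n₀) / (((k + n₀) ! : ℕ) : ℝ) := by
      have hfe : f (k + n₀) = (((k + n₀)! : ℕ) : ℂ)⁻¹ • A ^ (k + n₀) := rfl
      rw [hfe, norm_smul ((((k + n₀)! : ℕ) : ℂ))⁻¹ (A ^ (k + n₀)), norm_inv, RCLike.norm_natCast, div_eq_inv_mul]
      apply mul_le_mul_of_nonneg_left (norm_pow_le' A (by omega)) (by positivity)
    have h2 : ‖A‖ ^ (k + n₀) ≤ (d / Δ / Real.exp 1 ^ 2) ^ (k + n₀) :=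
      pow_le_pow_left₀ hA0 hAnorm _
    have h3 := aux_term (d / Δ) (k + n₀) (div_pos hdpos hΔ) han (by omega)
    have hrw : ((k + n₀ : ℕ) : ℝ) = (k : ℝ) + n₀ := by push_cast; ring
    calc ‖f (k + n₀)‖ ≤ ‖A‖ ^ (k + n₀) / (((k + n₀) ! : ℕ) : ℝ) := h1
      _ ≤ (d / Δ / Real.exp 1 ^ 2) ^ (k + n₀) / (((k + n₀)! : ℕ) : ℝ) := by
          gcongr
      _ ≤ Real.exp (d/Δ - 2 * ((k + n₀ : ℕ):ℝ) - 1) := h3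
      _ = Real.exp (d/Δ - 2 * ((k:ℝ) + n₀) - 1) := by rw [hrw]
  have hgeom_summable : Summable (fun k : ℕ => Real.exp (d/Δ - 2*((k:ℝ)+n₀) - 1)) := by
    have heq : (fun k : ℕ => Real.exp (d/Δ - 2*((k:ℝ)+n₀) - 1))
        = fun k : ℕ => Real.exp (d/Δ - 2*(n₀:ℝ) - 1) * Real.exp (-2) ^ k := by
      funext k
      rw [← Real.exp_nat_mul, ← Real.exp_add]
      ring_nf
    rw [heq]
    exact (summable_geometric_of_lt_one (Real.exp_pos _).le
      (by rw [Real.exp_lt_one_iff]; norm_num)).mul_left _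
  have hnormsum : Summable fun k => ‖f (k + n₀)‖ := by
    have hns := NormedSpace.norm_expSeries_summable' (𝕂 := ℂ) A
    exact (summable_nat_add_iff n₀).mpr hns
  have htail : ‖∑' k, f (k + n₀)‖ ≤ Real.exp (-(d/Δ)) := by
    calc ‖∑' k, f (k + n₀)‖ ≤ ∑' k, ‖f (k + n₀)‖ := norm_tsum_le_tsum_norm hnormsum
      _ ≤ ∑' (k : ℕ), Real.exp (d/Δ - 2*((k:ℝ)+n₀) - 1) :=
          Summable.tsum_le_tsum hterm hnormsum hgeom_summable
      _ ≤ Real.exp (-(d/Δ)) := aux_geom (d/Δ) n₀ han₀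
  have happly : NormedSpace.exp A v
      = (∑ n ∈ Finset.range n₀, f n) v + (∑' k, f (k + n₀)) v := by
    rw [hexp]
    rfl
  rw [happly, map_add, hP0, zero_add]
  calc ‖((Submodule.orthogonalProjectionOnto K₂ ((∑' k, f (k + n₀)) v)) : EuclideanSpace ℂ (Fin N))‖
      ≤ ‖(∑' k, f (k + n₀)) v‖ := hPnorm _
    _ ≤ ‖∑' k, f (k + n₀)‖ * ‖v‖ := le_opNorm _ _
    _ ≤ Real.exp (-(d/Δ)) * ‖v‖ :=
        mul_le_mul_of_nonneg_right htail (norm_nonneg v)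
end

section
/- Let H be Hermitian with ‖H‖ ≤ 1 and suppose P H^n v = 0 for all integers n with 0 ≤ n < m, where P is an orthogonal projection and v a vector. Then for any real t with e|t| < m, |P exp(-iHt) v| ≤ (1/e) · (e|t|/m)^m · (1 - e|t|/m)^{-1} · |v|. -/
open MeasureTheory ContinuousLinearMap
open scoped InnerProductSpace

private lemma pow_le_factorial_mul_exp : ∀ n : ℕ, 1 ≤ n →
    (n : ℝ) ^ n ≤ (n.factorial : ℝ) * Real.exp 1 ^ (n - 1) := by
  intro n hn
  induction n with
  | zero => omega
  | succ k ih =>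
    rcases Nat.eq_or_lt_of_le hn with h1 | h1
    · simp [← h1]
    · have hk : 1 ≤ k := by omega
      have ihk := ih hk
      have hkpos : (0 : ℝ) < k := by exact_mod_cast hk
      -- (k+1)^k ≤ k^k * e
      have key : ((k : ℝ) + 1) ^ k ≤ (k : ℝ) ^ k * Real.exp 1 := by
        have h2 : (1 : ℝ) + 1 / k ≤ Real.exp (1 / k) := by
          linarith [Real.add_one_le_exp (1 / (k : ℝ))]
        have h3 : ((1 : ℝ) + 1 / k) ^ k ≤ Real.exp (1 / k) ^ k :=
          pow_le_pow_left₀ (by positivity) h2 k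
        have h4 : Real.exp (1 / k) ^ k = Real.exp 1 := by
          rw [← Real.exp_nat_mul]
          congr 1
          field_simp
        calc ((k : ℝ) + 1) ^ k = ((k : ℝ) * (1 + 1 / k)) ^ k := by
              congr 1; field_simp
          _ = (k : ℝ) ^ k * (1 + 1 / k) ^ k := by rw [mul_pow]
          _ ≤ (k : ℝ) ^ k * Real.exp 1 := by
              apply mul_le_mul_of_nonneg_left _ (by positivity)
              exact h3.trans h4.le
      calc ((k + 1 : ℕ) : ℝ) ^ (k + 1) = ((k : ℝ) + 1) * ((k : ℝ) + 1) ^ k := by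
            push_cast; ring
        _ ≤ ((k : ℝ) + 1) * ((k : ℝ) ^ k * Real.exp 1) := by
            apply mul_le_mul_of_nonneg_left key (by positivity)
        _ ≤ ((k : ℝ) + 1) * (((k.factorial : ℝ) * Real.exp 1 ^ (k - 1)) * Real.exp 1) := by
            apply mul_le_mul_of_nonneg_left _ (by positivity)
            apply mul_le_mul_of_nonneg_right ihk (Real.exp_pos 1).le
        _ = (((k + 1) * k.factorial : ℕ) : ℝ) * (Real.exp 1 ^ (k - 1) * Real.exp 1) := by
            push_cast; ring
        _ = ((k + 1).factorial : ℝ) * Real.exp 1 ^ (k + 1 - 1) := by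
            rw [Nat.factorial_succ]
            congr 1
            rw [← pow_succ]
            congr 1
            omega

/-- Taylor-series tail bound in the proof of the Lieb-Robinson bound, Hastings: if `H`
is Hermitian with `‖H‖ ≤ 1`, `P` an orthogonal projection with `P Hⁿ v = 0` for all
`n < m`, then for `e|t| < m`,
`‖P exp(-iHt) v‖ ≤ (1/e) (e|t|/m)^m (1 - e|t|/m)⁻¹ ‖v‖`. -/
theorem stmt3 (N : ℕ) (H P : EuclideanSpace ℂ (Fin N) →L[ℂ] EuclideanSpace ℂ (Fin N))
    (hH : IsSelfAdjoint H) (hHnorm : ‖H‖ ≤ 1)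
    (hPproj : P * P = P) (hPsa : IsSelfAdjoint P)
    (v : EuclideanSpace ℂ (Fin N)) (m : ℕ) (hm : 1 ≤ m)
    (hvanish : ∀ n : ℕ, n < m → P ((H ^ n) v) = 0) :
    ∀ t : ℝ, Real.exp 1 * |t| < m →
      ‖P ((NormedSpace.exp ((-(Complex.I * (t : ℂ))) • H)) v)‖ ≤
        (1 / Real.exp 1) * (Real.exp 1 * |t| / m) ^ m *
          (1 - Real.exp 1 * |t| / m)⁻¹ * ‖v‖ := by
  intro t ht
  set r : ℝ := Real.exp 1 * |t| / m with hr_def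
  have hmpos : (0 : ℝ) < m := by exact_mod_cast hm
  have hr0 : 0 ≤ r := by positivity
  have hr1 : r < 1 := by rw [hr_def, div_lt_one hmpos]; exact ht
  -- P is a contraction
  have hP1 : ∀ x : EuclideanSpace ℂ (Fin N), ‖P x‖ ≤ ‖x‖ := by
    intro x
    have hadj : ContinuousLinearMap.adjoint P = P := by
      rw [← ContinuousLinearMap.star_eq_adjoint]; exact hPsa
    have hPP : P (P x) = P x := by
      have := congrArg (fun (Q : EuclideanSpace ℂ (Fin N) →L[ℂ] EuclideanSpace ℂ (Fin N)) => Q x)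
        hPproj
      simpa [ContinuousLinearMap.mul_apply] using this
    have h1 : ⟪P x, P x⟫_ℂ = ⟪x, P x⟫_ℂ := by
      calc ⟪P x, P x⟫_ℂ = ⟪x, (ContinuousLinearMap.adjoint P) (P x)⟫_ℂ :=
            (ContinuousLinearMap.adjoint_inner_right P x (P x)).symm
        _ = ⟪x, P (P x)⟫_ℂ := by rw [hadj]
        _ = ⟪x, P x⟫_ℂ := by rw [hPP]
    have h2 : ‖P x‖ ^ 2 ≤ ‖x‖ * ‖P x‖ := by
      rw [← inner_self_eq_norm_sq (𝕜 := ℂ) (P x), h1]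
      exact re_inner_le_norm x (P x)
    nlinarith [norm_nonneg (P x), norm_nonneg x]
  set A : EuclideanSpace ℂ (Fin N) →L[ℂ] EuclideanSpace ℂ (Fin N) :=
    (-(Complex.I * (t : ℂ))) • H with hA_def
  have hAnorm : ‖A‖ ≤ |t| := by
    have hc : ‖-(Complex.I * (t : ℂ))‖ = |t| := by
      rw [norm_neg, norm_mul, Complex.norm_I, Complex.norm_real, one_mul, Real.norm_eq_abs]
    calc ‖A‖ ≤ ‖-(Complex.I * (t : ℂ))‖ * ‖H‖ := by
          rw [hA_def]; exact ContinuousLinearMap.opNorm_smul_le _ _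
      _ = |t| * ‖H‖ := by rw [hc]
      _ ≤ |t| * 1 := mul_le_mul_of_nonneg_left hHnorm (abs_nonneg t)
      _ = |t| := mul_one _
  -- the series term
  set f : ℕ → EuclideanSpace ℂ (Fin N) := fun n => ((n.factorial : ℂ))⁻¹ • P ((A ^ n) v)
    with hf_def
  have hsummable : Summable fun n : ℕ => ((n.factorial : ℂ))⁻¹ • A ^ n :=
    NormedSpace.expSeries_summable' A
  have hPexp : P ((NormedSpace.exp A) v) = ∑' n : ℕ, f n := by
    have hexp : NormedSpace.exp A = ∑' n : ℕ, ((n.factorial : ℂ))⁻¹ • A ^ n := by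
      rw [NormedSpace.exp_eq_tsum ℂ]
    rw [hexp]
    let φ : (EuclideanSpace ℂ (Fin N) →L[ℂ] EuclideanSpace ℂ (Fin N)) →L[ℂ]
        EuclideanSpace ℂ (Fin N) := P.comp (ContinuousLinearMap.apply ℂ (EuclideanSpace ℂ (Fin N)) v)
    have h0 : P ((∑' n : ℕ, ((n.factorial : ℂ))⁻¹ • A ^ n) v)
        = φ (∑' n : ℕ, ((n.factorial : ℂ))⁻¹ • A ^ n) := rfl
    rw [h0, ContinuousLinearMap.map_tsum φ hsummable]
    exact tsum_congr fun n => by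
      show P ((((n.factorial : ℂ))⁻¹ • A ^ n) v) = ((n.factorial : ℂ))⁻¹ • P ((A ^ n) v)
      rw [ContinuousLinearMap.smul_apply, ContinuousLinearMap.map_smul]
  have hzero : ∀ n, n < m → f n = 0 := by
    intro n hn
    rw [hf_def]
    simp only
    have e1 : A ^ n = (-(Complex.I * (t : ℂ))) ^ n • H ^ n := smul_pow _ _ _
    have e2 : ((-(Complex.I * (t : ℂ))) ^ n • H ^ n) v
        = (-(Complex.I * (t : ℂ))) ^ n • ((H ^ n) v) := rfl
    rw [e1, e2, ContinuousLinearMap.map_smul, hvanish n hn, smul_zero, smul_zero]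
  -- norm bound on each term
  have hfnorm : ∀ k : ℕ, m ≤ k → ‖f k‖ ≤ (1 / Real.exp 1) * r ^ k * ‖v‖ := by
    intro k hk
    have hk1 : 1 ≤ k := le_trans hm hk
    have hkpos : (0 : ℝ) < k := by exact_mod_cast hk1
    have hfact : (0 : ℝ) < (k.factorial : ℝ) := by exact_mod_cast k.factorial_pos
    have step1 : ‖f k‖ ≤ ((k.factorial : ℝ))⁻¹ * (|t| ^ k * ‖v‖) := by
      rw [hf_def]
      simp only [norm_smul]
      have h1 : ‖((k.factorial : ℂ))⁻¹‖ = ((k.factorial : ℝ))⁻¹ := by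
        rw [norm_inv]
        congr 1
        rw [Complex.norm_natCast]
      rw [h1]
      apply mul_le_mul_of_nonneg_left _ (by positivity)
      calc ‖P ((A ^ k) v)‖ ≤ ‖(A ^ k) v‖ := hP1 _
        _ ≤ ‖A ^ k‖ * ‖v‖ := ContinuousLinearMap.le_opNorm _ _
        _ ≤ ‖A‖ ^ k * ‖v‖ := by
            apply mul_le_mul_of_nonneg_right (norm_pow_le' A (by omega)) (norm_nonneg v)
        _ ≤ |t| ^ k * ‖v‖ := by
            apply mul_le_mul_of_nonneg_right _ (norm_nonneg v)
            exact pow_le_pow_left₀ (norm_nonneg A) hAnorm k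
    -- |t|^k / k! ≤ (1/e) * r^k
    have step2 : ((k.factorial : ℝ))⁻¹ * |t| ^ k ≤ (1 / Real.exp 1) * r ^ k := by
      have hkk : (k : ℝ) ^ k ≤ (k.factorial : ℝ) * Real.exp 1 ^ (k - 1) :=
        pow_le_factorial_mul_exp k hk1
      have key : ((k.factorial : ℝ))⁻¹ * |t| ^ k
          ≤ (1 / Real.exp 1) * (Real.exp 1 * |t| / k) ^ k := by
        have he : Real.exp 1 ^ k = Real.exp 1 * Real.exp 1 ^ (k - 1) := by
          rw [← pow_succ']
          congr 1
          omega
        have goal_equiv : (1 / Real.exp 1) * (Real.exp 1 * |t| / (k : ℝ)) ^ k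
            = Real.exp 1 ^ (k - 1) * |t| ^ k / (k : ℝ) ^ k := by
          rw [div_pow, mul_pow, he]
          field_simp
        rw [goal_equiv, inv_mul_eq_div,
          div_le_div_iff₀ hfact (pow_pos hkpos k)]
        calc |t| ^ k * (k : ℝ) ^ k
            ≤ |t| ^ k * ((k.factorial : ℝ) * Real.exp 1 ^ (k - 1)) :=
              mul_le_mul_of_nonneg_left hkk (by positivity)
          _ = Real.exp 1 ^ (k - 1) * |t| ^ k * (k.factorial : ℝ) := by ring
      calc ((k.factorial : ℝ))⁻¹ * |t| ^ k
          ≤ (1 / Real.exp 1) * (Real.exp 1 * |t| / k) ^ k := key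
        _ ≤ (1 / Real.exp 1) * r ^ k := by
            apply mul_le_mul_of_nonneg_left _ (by positivity)
            apply pow_le_pow_left₀ (by positivity)
            apply div_le_div_of_nonneg_left (by positivity) hmpos
            exact_mod_cast hk
    calc ‖f k‖ ≤ ((k.factorial : ℝ))⁻¹ * (|t| ^ k * ‖v‖) := step1
      _ = (((k.factorial : ℝ))⁻¹ * |t| ^ k) * ‖v‖ := by ring
      _ ≤ ((1 / Real.exp 1) * r ^ k) * ‖v‖ := by
          apply mul_le_mul_of_nonneg_right step2 (norm_nonneg v)
      _ = (1 / Real.exp 1) * r ^ k * ‖v‖ := by ring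
  -- shift the sum
  have hshift : ∑' n : ℕ, f n = ∑' n : ℕ, f (n + m) := by
    refine (Function.Injective.tsum_eq (g := fun n => n + m) (add_left_injective m) ?_).symm
    intro x hx
    rcases le_or_gt m x with h | h
    · exact ⟨x - m, show x - m + m = x by omega⟩
    · exact absurd (hzero x h) hx
  -- assemble
  have hterm : ∀ n : ℕ, ‖f (n + m)‖ ≤ ((1 / Real.exp 1) * r ^ m * ‖v‖) * r ^ n := by
    intro n
    calc ‖f (n + m)‖ ≤ (1 / Real.exp 1) * r ^ (n + m) * ‖v‖ := hfnorm (n + m) (by omega)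
      _ = ((1 / Real.exp 1) * r ^ m * ‖v‖) * r ^ n := by rw [pow_add]; ring
  have hgs : Summable fun n : ℕ => ((1 / Real.exp 1) * r ^ m * ‖v‖) * r ^ n :=
    (summable_geometric_of_lt_one hr0 hr1).mul_left _
  have hns : Summable fun n : ℕ => ‖f (n + m)‖ :=
    Summable.of_nonneg_of_le (fun n => norm_nonneg _) hterm hgs
  rw [hPexp, hshift]
  calc ‖∑' n : ℕ, f (n + m)‖ ≤ ∑' n : ℕ, ‖f (n + m)‖ := norm_tsum_le_tsum_norm hns
    _ ≤ ∑' n : ℕ, ((1 / Real.exp 1) * r ^ m * ‖v‖) * r ^ n := Summable.tsum_le_tsum hterm hns hgs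
    _ = ((1 / Real.exp 1) * r ^ m * ‖v‖) * (1 - r)⁻¹ := by
        rw [tsum_mul_left, tsum_geometric_of_lt_one hr0 hr1]
    _ = (1 / Real.exp 1) * r ^ m * (1 - r)⁻¹ * ‖v‖ := by ring
end

section
/- Let τ₀, ..., τ_{k-1} be matrices (with common domain) such that τᵢ† τⱼ = 0 whenever |i - j| > 1. Then for any vector x, |∑_{i} τᵢ x|² ≤ 2 ∑_{i} |τᵢ x|². -/
open ContinuousLinearMap
open scoped InnerProductSpace

lemma norm_sq_sum_of_orth {F : Type*} [NormedAddCommGroup F] [InnerProductSpace ℂ F]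
    {ι : Type*} (s : Finset ι) (f : ι → F)
    (h : ∀ i ∈ s, ∀ j ∈ s, i ≠ j → ⟪f i, f j⟫_ℂ = 0) :
    ‖∑ i ∈ s, f i‖ ^ 2 = ∑ i ∈ s, ‖f i‖ ^ 2 := by
  classical
  have key : (⟪∑ i ∈ s, f i, ∑ j ∈ s, f j⟫_ℂ) = ∑ i ∈ s, ⟪f i, f i⟫_ℂ := by
    rw [inner_sum]
    refine Finset.sum_congr rfl fun j hj => ?_
    rw [sum_inner]
    rw [Finset.sum_eq_single j (fun i hi hij => h i hi j hj hij) (fun hj' => absurd hj hj')]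
  rw [InnerProductSpace.norm_sq_eq_re_inner (𝕜 := ℂ), key, map_sum]
  exact Finset.sum_congr rfl fun i _ => (InnerProductSpace.norm_sq_eq_re_inner (𝕜 := ℂ) (f i)).symm

/-- Overlap estimate (Eq. (18) in Hastings): if the ranges of `τ i` and `τ j` are
orthogonal whenever `|i - j| > 1`, then `‖∑ i, τ i x‖² ≤ 2 ∑ i, ‖τ i x‖²`. -/
theorem stmt6 (k d D : ℕ)
    (τ : Fin k → (EuclideanSpace ℂ (Fin d) →L[ℂ] EuclideanSpace ℂ (Fin D)))
    (horth : ∀ i j : Fin k, 1 < |(i : ℤ) - (j : ℤ)| →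
      ∀ (x y : EuclideanSpace ℂ (Fin d)), ⟪τ i x, τ j y⟫_ℂ = 0) :
    ∀ x : EuclideanSpace ℂ (Fin d),
      ‖∑ i : Fin k, τ i x‖ ^ 2 ≤ 2 * ∑ i : Fin k, ‖τ i x‖ ^ 2 := by
  intro x
  classical
  set se : Finset (Fin k) := Finset.univ.filter (fun i => Even (i : ℕ)) with hse
  set so : Finset (Fin k) := Finset.univ.filter (fun i => ¬ Even (i : ℕ)) with hso
  have hsplit : (∑ i : Fin k, τ i x) = (∑ i ∈ se, τ i x) + (∑ i ∈ so, τ i x) := by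
    rw [hse, hso, Finset.sum_filter_add_sum_filter_not]
  have he : ‖∑ i ∈ se, τ i x‖ ^ 2 = ∑ i ∈ se, ‖τ i x‖ ^ 2 :=
    norm_sq_sum_of_orth se _ (fun i hi j hj hij => by
      refine horth i j ?_ x x
      simp only [hse, Finset.mem_filter] at hi hj
      have hne : (i : ℕ) ≠ (j : ℕ) := fun h => hij (Fin.ext h)
      obtain ⟨a, ha⟩ := hi.2
      obtain ⟨b, hb⟩ := hj.2
      rw [lt_abs]; omega)
  have ho : ‖∑ i ∈ so, τ i x‖ ^ 2 = ∑ i ∈ so, ‖τ i x‖ ^ 2 :=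
    norm_sq_sum_of_orth so _ (fun i hi j hj hij => by
      refine horth i j ?_ x x
      simp only [hso, Finset.mem_filter] at hi hj
      have hne : (i : ℕ) ≠ (j : ℕ) := fun h => hij (Fin.ext h)
      obtain ⟨a, ha⟩ := Nat.not_even_iff_odd.mp hi.2
      obtain ⟨b, hb⟩ := Nat.not_even_iff_odd.mp hj.2
      rw [lt_abs]; omega)
  have hsum : (∑ i : Fin k, ‖τ i x‖ ^ 2) = (∑ i ∈ se, ‖τ i x‖ ^ 2) + (∑ i ∈ so, ‖τ i x‖ ^ 2) := by
    rw [hse, hso, Finset.sum_filter_add_sum_filter_not]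
  have htri : ‖∑ i : Fin k, τ i x‖ ≤ ‖∑ i ∈ se, τ i x‖ + ‖∑ i ∈ so, τ i x‖ := by
    rw [hsplit]; exact norm_add_le _ _
  have h0 : (0:ℝ) ≤ ‖∑ i : Fin k, τ i x‖ := norm_nonneg _
  nlinarith [norm_nonneg (∑ i ∈ se, τ i x), norm_nonneg (∑ i ∈ so, τ i x),
    sq_nonneg (‖∑ i ∈ se, τ i x‖ - ‖∑ i ∈ so, τ i x‖)]
end

section
/- Let M be a Hermitian tridiagonal n×n matrix with 1's on the diagonal and off-diagonal entries M_{i,i+1} satisfying |M_{i,i+1}|² + |M_{i+1,i+2}|² ≤ 1/2 for all even i. Then M is positive semidefinite. -/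
open scoped ComplexOrder Matrix

private lemma tri_sum' (T : ℕ → ℕ → ℂ) (hT : ∀ j k, j + 1 < k → T j k = 0)
    (hT' : ∀ j k, k + 1 < j → T j k = 0) (m : ℕ) :
    ∑ j ∈ Finset.range m, ∑ k ∈ Finset.range m, T j k =
      ∑ j ∈ Finset.range m, T j j +
        ∑ j ∈ Finset.range (m - 1), (T j (j + 1) + T (j + 1) j) := by
  induction m with
  | zero => simp
  | succ m ih =>
    rcases Nat.eq_zero_or_pos m with rfl | hm
    · simp
    have hrow : ∑ k ∈ Finset.range m, T m k = T m (m - 1) := by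
      apply Finset.sum_eq_single_of_mem
      · exact Finset.mem_range.mpr (by omega)
      · intro k hk hne
        exact hT' m k (by simp at hk; omega)
    have hcol : ∑ j ∈ Finset.range m, T j m = T (m - 1) m := by
      apply Finset.sum_eq_single_of_mem
      · exact Finset.mem_range.mpr (by omega)
      · intro j hj hne
        exact hT j m (by simp at hj; omega)
    have expand : ∑ j ∈ Finset.range (m+1), ∑ k ∈ Finset.range (m+1), T j k
        = (∑ j ∈ Finset.range m, ∑ k ∈ Finset.range m, T j k)
          + (∑ j ∈ Finset.range m, T j m) + (∑ k ∈ Finset.range m, T m k) + T m m := by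
      rw [Finset.sum_range_succ]
      have : ∀ j, ∑ k ∈ Finset.range (m+1), T j k = (∑ k ∈ Finset.range m, T j k) + T j m := by
        intro j; rw [Finset.sum_range_succ]
      simp_rw [this]
      rw [Finset.sum_add_distrib]
      ring
    rw [expand, ih, hrow, hcol]
    obtain ⟨m', rfl⟩ : ∃ m', m = m' + 1 := ⟨m - 1, by omega⟩
    simp only [Nat.add_sub_cancel]
    simp only [Finset.sum_range_succ]
    ring

private lemma pair_sum' (f : ℕ → ℝ) (m : ℕ) :
    ∑ j ∈ Finset.range (2 * m), f j = ∑ k ∈ Finset.range m, (f (2 * k) + f (2 * k + 1)) := by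
  induction m with
  | zero => simp
  | succ m ih =>
    have : 2 * (m + 1) = (2 * m + 1) + 1 := by ring
    rw [this, Finset.sum_range_succ, Finset.sum_range_succ, Finset.sum_range_succ, ih]
    ring

set_option maxHeartbeats 1000000 in
/-- Positive semidefiniteness of the tridiagonal overlap matrix (remark after Lemma 4,
Hastings): a Hermitian tridiagonal matrix with unit diagonal whose consecutive pairs of
off-diagonal entries starting at even positions satisfy
`|M_{i,i+1}|² + |M_{i+1,i+2}|² ≤ 1/2` is positive semidefinite. -/
theorem stmt8 (n : ℕ) (M : Matrix (Fin n) (Fin n) ℂ)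
    (hHerm : M.IsHermitian)
    (hdiag : ∀ i : Fin n, M i i = 1)
    (htri : ∀ i j : Fin n, 1 < |(i : ℤ) - (j : ℤ)| → M i j = 0)
    (hoff : ∀ i : ℕ, Even i → ∀ h1 : i + 1 < n,
      ‖M ⟨i, by omega⟩ ⟨i + 1, h1⟩‖ ^ 2 +
        (if h2 : i + 2 < n then
          ‖M ⟨i + 1, by omega⟩ ⟨i + 2, h2⟩‖ ^ 2 else (0:ℝ)) ≤ (1 / 2 : ℝ)) :
    M.PosSemidef := by
  refine Matrix.PosSemidef.of_dotProduct_mulVec_nonneg hHerm fun x => ?_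
  set y : ℕ → ℂ := fun i => if h : i < n then x ⟨i, h⟩ else 0 with hy
  set A : ℕ → ℕ → ℂ := fun j k => if h : j < n ∧ k < n then M ⟨j, h.1⟩ ⟨k, h.2⟩ else 0 with hA
  set T : ℕ → ℕ → ℂ := fun j k => (starRingEnd ℂ) (y j) * A j k * y k with hTdef
  -- A is Hermitian
  have hAherm : ∀ j k, (starRingEnd ℂ) (A j k) = A k j := by
    intro j k
    simp only [hA]
    by_cases h : j < n ∧ k < n
    · rw [dif_pos h, dif_pos ⟨h.2, h.1⟩]
      have := hHerm.apply ⟨k, h.2⟩ ⟨j, h.1⟩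
      simpa [Matrix.conjTranspose_apply] using this
    · rw [dif_neg h, dif_neg (by tauto), map_zero]
  -- T vanishes off the tridiagonal
  have hT0 : ∀ j k : ℕ, j + 1 < k → T j k = 0 := by
    intro j k hjk
    simp only [hTdef, hA]
    by_cases h : j < n ∧ k < n
    · have e1 : ((⟨j, h.1⟩ : Fin n) : ℤ) = (j : ℤ) := by simp
      have e2 : ((⟨k, h.2⟩ : Fin n) : ℤ) = (k : ℤ) := by simp
      have habs : 1 < |((⟨j, h.1⟩ : Fin n) : ℤ) - ((⟨k, h.2⟩ : Fin n) : ℤ)| := by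
        rw [e1, e2, abs_of_nonpos (by omega)]; omega
      rw [dif_pos h, htri ⟨j, h.1⟩ ⟨k, h.2⟩ habs]; ring
    · rw [dif_neg h]; ring
  have hT0' : ∀ j k : ℕ, k + 1 < j → T j k = 0 := by
    intro j k hjk
    simp only [hTdef, hA]
    by_cases h : j < n ∧ k < n
    · have e1 : ((⟨j, h.1⟩ : Fin n) : ℤ) = (j : ℤ) := by simp
      have e2 : ((⟨k, h.2⟩ : Fin n) : ℤ) = (k : ℤ) := by simp
      have habs : 1 < |((⟨j, h.1⟩ : Fin n) : ℤ) - ((⟨k, h.2⟩ : Fin n) : ℤ)| := by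
        rw [e1, e2, abs_of_nonneg (by omega)]; omega
      rw [dif_pos h, htri ⟨j, h.1⟩ ⟨k, h.2⟩ habs]; ring
    · rw [dif_neg h]; ring
  -- conj T j k = T k j
  have hTconj : ∀ j k, (starRingEnd ℂ) (T j k) = T k j := by
    intro j k
    simp only [hTdef, map_mul, RingHom.map_mul, Complex.conj_conj, hAherm]
    ring
  -- quadratic form as double sum
  have hQ : star x ⬝ᵥ M *ᵥ x = ∑ j ∈ Finset.range n, ∑ k ∈ Finset.range n, T j k := by
    have step1 : star x ⬝ᵥ M *ᵥ x = ∑ j : Fin n, ∑ k : Fin n, T j k := by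
      simp only [dotProduct, Matrix.mulVec, Pi.star_apply, Finset.mul_sum]
      refine Finset.sum_congr rfl fun j _ => Finset.sum_congr rfl fun k _ => ?_
      simp only [hTdef, hA, hy, j.isLt, k.isLt, dif_pos, and_self, Fin.eta]
      simp [RCLike.star_def]
      ring
    rw [step1, Fin.sum_univ_eq_sum_range (fun j => ∑ k : Fin n, T j k)]
    exact Finset.sum_congr rfl fun j _ =>
      Fin.sum_univ_eq_sum_range (fun k => T j k) n
  set Q : ℂ := star x ⬝ᵥ M *ᵥ x with hQdef
  -- Q is real
  have hQreal : (Q.re : ℂ) = Q := by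
    rw [← Complex.conj_eq_iff_re]
    rw [hQ]
    rw [map_sum]
    simp_rw [map_sum, hTconj]
    exact Finset.sum_comm
  -- reduce to tridiagonal sum
  have hQ2 : Q = ∑ j ∈ Finset.range n, T j j +
      ∑ j ∈ Finset.range (n - 1), (T j (j + 1) + T (j + 1) j) := by
    rw [hQ]; exact tri_sum' T hT0 hT0' n
  -- the real pieces
  set g : ℕ → ℝ := fun j => Complex.normSq (y j) + 2 * (T j (j + 1)).re with hg
  have hTjj : ∀ j ∈ Finset.range n, (T j j).re = Complex.normSq (y j) := by
    intro j hj
    rw [Finset.mem_range] at hj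
    have hAjj : A j j = 1 := by
      simp only [hA]
      rw [dif_pos (show j < n ∧ j < n from ⟨hj, hj⟩)]
      exact hdiag _
    have hTj : T j j = ((Complex.normSq (y j) : ℝ) : ℂ) := by
      simp only [hTdef, hAjj, mul_one]
      rw [mul_comm, Complex.mul_conj]
    rw [hTj, Complex.ofReal_re]
  have hQre : Q.re = ∑ j ∈ Finset.range n, g j := by
    have h1 : Q.re = ∑ j ∈ Finset.range n, (T j j).re +
        ∑ j ∈ Finset.range (n - 1), (2 * (T j (j + 1)).re) := by
      rw [hQ2]
      simp only [Complex.add_re, Complex.re_sum]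
      congr 1
      refine Finset.sum_congr rfl fun j _ => ?_
      have : T (j + 1) j = (starRingEnd ℂ) (T j (j + 1)) := (hTconj _ _).symm
      rw [this, Complex.conj_re]
      ring
    have h2 : ∑ j ∈ Finset.range (n - 1), (2 * (T j (j + 1)).re) =
        ∑ j ∈ Finset.range n, (2 * (T j (j + 1)).re) := by
      refine Finset.sum_subset (Finset.range_subset_range.mpr (by omega)) ?_
      intro j hj hj'
      rw [Finset.mem_range] at hj
      have hjn : ¬ (j + 1 < n) := by simp at hj'; omega
      have : T j (j + 1) = 0 := by
        simp only [hTdef, hA, dif_neg (by tauto : ¬ (j < n ∧ j + 1 < n))]; ring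
      rw [this]; simp
    rw [h1, h2, ← Finset.sum_add_distrib]
    exact Finset.sum_congr rfl fun j hj => by rw [hg, hTjj j hj]
  -- g vanishes beyond n
  have hgzero : ∀ j, n ≤ j → g j = 0 := by
    intro j hj
    have hyj : y j = 0 := by simp only [hy]; rw [dif_neg (by omega)]
    simp [hg, hTdef, hyj]
  have hyzero : ∀ j, n ≤ j → y j = 0 := fun j hj => by
    simp only [hy]; rw [dif_neg (by omega)]
  set m : ℕ := (n + 1) / 2 with hm
  have hmn : n ≤ 2 * m := by omega
  have hsum2m : ∑ j ∈ Finset.range n, g j = ∑ j ∈ Finset.range (2 * m), g j := by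
    refine Finset.sum_subset (Finset.range_subset_range.mpr hmn) ?_
    intro j _ hj'
    exact hgzero j (by simp at hj'; omega)
  -- key bound on off-diagonal pairs
  have key : ∀ i : ℕ, Even i →
      ‖A i (i + 1)‖ ^ 2 + ‖A (i + 1) (i + 2)‖ ^ 2 ≤ 1 / 2 := by
    intro i hi
    by_cases h1 : i + 1 < n
    · have h0 : i < n := by omega
      have := hoff i hi h1
      have e1 : A i (i + 1) = M ⟨i, h0⟩ ⟨i + 1, h1⟩ := by
        simp only [hA]
        rw [dif_pos (show i < n ∧ i + 1 < n from ⟨h0, h1⟩)]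
      rw [e1]
      by_cases h2 : i + 2 < n
      · have e2 : A (i + 1) (i + 2) = M ⟨i + 1, h1⟩ ⟨i + 2, h2⟩ := by
          simp only [hA]
          rw [dif_pos (show i + 1 < n ∧ i + 2 < n from ⟨h1, h2⟩)]
        rw [e2]
        rw [dif_pos h2] at this
        exact this
      · have e2 : A (i + 1) (i + 2) = 0 := by
          simp only [hA, dif_neg (by tauto : ¬ (i + 1 < n ∧ i + 2 < n))]
        rw [e2]
        rw [dif_neg h2] at this
        simpa using this
    · have e1 : A i (i + 1) = 0 := by
        simp only [hA, dif_neg (by tauto : ¬ (i < n ∧ i + 1 < n))]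
      have e2 : A (i + 1) (i + 2) = 0 := by
        simp only [hA]
        rw [dif_neg (show ¬ (i + 1 < n ∧ i + 2 < n) by omega)]
      rw [e1, e2]
      norm_num
  -- pairing and telescoping
  set φ : ℕ → ℝ := fun k => Complex.normSq (y (2 * k)) / 2 with hφ
  have hφm : φ m = 0 := by
    simp only [hφ, hyzero (2 * m) hmn]; simp
  have htele : ∑ k ∈ Finset.range m, (φ (k + 1) - φ k) = φ m - φ 0 :=
    Finset.sum_range_sub φ m
  have hpos : ∀ k ∈ Finset.range m, 0 ≤ g (2 * k) + g (2 * k + 1) + (φ (k + 1) - φ k) := by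
    intro k _
    set i : ℕ := 2 * k with hi
    have hieven : Even i := ⟨k, by omega⟩
    have h2k1 : 2 * (k + 1) = i + 2 := by omega
    have hre1 : -(‖A i (i + 1)‖ * ‖y i‖ * ‖y (i + 1)‖)
        ≤ (T i (i + 1)).re := by
      have hra : |(T i (i + 1)).re| ≤ ‖T i (i + 1)‖ := Complex.abs_re_le_norm _
      have hrb : -|(T i (i + 1)).re| ≤ (T i (i + 1)).re := neg_abs_le _
      have : -(‖T i (i + 1)‖) ≤ (T i (i + 1)).re := by linarith
      have habs : ‖T i (i + 1)‖ =
          ‖A i (i + 1)‖ * ‖y i‖ * ‖y (i + 1)‖ := by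
        simp only [hTdef, norm_mul, Complex.norm_conj]
        ring
      rw [habs] at this
      exact this
    have hre2 : -(‖A (i + 1) (i + 2)‖ * ‖y (i + 1)‖ * ‖y (i + 2)‖)
        ≤ (T (i + 1) (i + 2)).re := by
      have hra : |(T (i + 1) (i + 2)).re| ≤ ‖T (i + 1) (i + 2)‖ := Complex.abs_re_le_norm _
      have hrb : -|(T (i + 1) (i + 2)).re| ≤ (T (i + 1) (i + 2)).re := neg_abs_le _
      have : -(‖T (i + 1) (i + 2)‖) ≤ (T (i + 1) (i + 2)).re := by linarith
      have habs : ‖T (i + 1) (i + 2)‖ =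
          ‖A (i + 1) (i + 2)‖ * ‖y (i + 1)‖ * ‖y (i + 2)‖ := by
        simp only [hTdef, norm_mul, Complex.norm_conj]
        ring
      rw [habs] at this
      exact this
    have hkey := key i hieven
    set a : ℝ := ‖A i (i + 1)‖ with ha
    set b : ℝ := ‖A (i + 1) (i + 2)‖ with hb
    set p : ℝ := ‖y i‖ with hp
    set q : ℝ := ‖y (i + 1)‖ with hq
    set r : ℝ := ‖y (i + 2)‖ with hr
    have hnp : Complex.normSq (y i) = p ^ 2 := by rw [hp, Complex.sq_norm]
    have hnq : Complex.normSq (y (i + 1)) = q ^ 2 := by rw [hq, Complex.sq_norm]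
    have hnr : Complex.normSq (y (i + 2)) = r ^ 2 := by rw [hr, Complex.sq_norm]
    have hg1 : g i = p ^ 2 + 2 * (T i (i + 1)).re := by simp only [hg]; rw [hnp]
    have hg2 : g (i + 1) = q ^ 2 + 2 * (T (i + 1) (i + 2)).re := by simp only [hg]; rw [hnq]
    have hφ1 : φ (k + 1) = r ^ 2 / 2 := by simp only [hφ]; rw [h2k1, hnr]
    have hφ0 : φ k = p ^ 2 / 2 := by simp only [hφ]; rw [← hi, hnp]
    have hpge : 0 ≤ p := norm_nonneg _
    have hqge : 0 ≤ q := norm_nonneg _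
    have hrge : 0 ≤ r := norm_nonneg _
    have hage : 0 ≤ a := norm_nonneg _
    have hbge : 0 ≤ b := norm_nonneg _
    rw [hg1, hg2, hφ1, hφ0]
    nlinarith [sq_nonneg (q - a * p - b * r), sq_nonneg (a * r - b * p),
      mul_nonneg (by nlinarith : (0:ℝ) ≤ 1 / 2 - a ^ 2 - b ^ 2)
        (by positivity : (0:ℝ) ≤ p ^ 2 + r ^ 2), hre1, hre2]
  -- assemble
  have hQre_nonneg : 0 ≤ Q.re := by
    rw [hQre, hsum2m, pair_sum' g m]
    have h1 : 0 ≤ ∑ k ∈ Finset.range m, (g (2 * k) + g (2 * k + 1) + (φ (k + 1) - φ k)) :=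
      Finset.sum_nonneg hpos
    have hsplit : ∑ k ∈ Finset.range m, (g (2 * k) + g (2 * k + 1) + (φ (k + 1) - φ k)) =
        ∑ k ∈ Finset.range m, (g (2 * k) + g (2 * k + 1)) +
          ∑ k ∈ Finset.range m, (φ (k + 1) - φ k) := Finset.sum_add_distrib
    have h2 : 0 ≤ φ 0 := by
      simp only [hφ]
      exact div_nonneg (Complex.normSq_nonneg _) (by norm_num)
    rw [htele, hφm] at hsplit
    linarith
  have hfin : Q = ((Q.re : ℝ) : ℂ) := hQreal.symm
  show (0 : ℂ) ≤ Q
  rw [hfin]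
  exact Complex.zero_le_real.mpr hQre_nonneg
end

section
/- Let J be an L×L Hermitian matrix, v₁ a unit vector, and for i = 0,...,n-1 let ρᵢ = |Fᵢ(J)v₁|² where Fᵢ are nonnegative functions summing to 1 on the spectrum of J with 0 ≤ Fᵢ ≤ 1. Then ∑_{i=0}^{n-1} ρᵢ ≤ 1, and if Fᵢ·Fⱼ = 0 for |i-j| > 1 then ∑ᵢ ρᵢ ≥ |v₁|²/2 = 1/2. -/
open ContinuousLinearMap
open scoped InnerProductSpace

lemma key_half (n : ℕ) (f : Fin n → ℝ) (h0 : ∀ i, 0 ≤ f i) (hsum : ∑ i, f i = 1)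
    (hdisj : ∀ i j : Fin n, 1 < |(i : ℤ) - (j : ℤ)| → f i * f j = 0) :
    1 / 2 ≤ ∑ i, f i ^ 2 := by
  classical
  set a : Fin n → ℝ := fun i => if Even (i : ℕ) then f i else 0 with ha
  set c : Fin n → ℝ := fun i => if Even (i : ℕ) then 0 else f i with hc
  have hsq : ∀ (g : Fin n → ℝ), (∀ i j : Fin n, i ≠ j → g i * g j = 0) →
      (∑ i, g i) ^ 2 = ∑ i, g i ^ 2 := by
    intro g hg
    rw [sq, Finset.sum_mul_sum]
    refine Finset.sum_congr rfl fun i _ => ?_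
    rw [Finset.sum_eq_single i (fun j _ hj => hg i j (Ne.symm hj)) (by simp), sq]
  have hija : ∀ i j : Fin n, i ≠ j → a i * a j = 0 := by
    intro i j hij
    by_cases hi : Even (i : ℕ) <;> by_cases hj : Even (j : ℕ) <;>
      simp only [ha, hi, hj, if_true, if_false, mul_zero, zero_mul, if_neg, if_pos]
    apply hdisj
    rw [lt_abs]
    obtain ⟨p, hp⟩ := hi
    obtain ⟨q, hq⟩ := hj
    have hne : (i : ℕ) ≠ (j : ℕ) := fun h => hij (Fin.ext h)
    omega
  have hijc : ∀ i j : Fin n, i ≠ j → c i * c j = 0 := by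
    intro i j hij
    by_cases hi : Even (i : ℕ) <;> by_cases hj : Even (j : ℕ) <;>
      simp only [hc, hi, hj, if_true, if_false, mul_zero, zero_mul, if_neg, if_pos]
    apply hdisj
    rw [lt_abs]
    rw [Nat.not_even_iff] at hi hj
    have hne : (i : ℕ) ≠ (j : ℕ) := fun h => hij (Fin.ext h)
    omega
  have hA := hsq a hija
  have hC := hsq c hijc
  have hsum' : (∑ i, a i) + (∑ i, c i) = 1 := by
    rw [← Finset.sum_add_distrib, ← hsum]
    refine Finset.sum_congr rfl fun i _ => ?_
    by_cases hi : Even (i : ℕ) <;> simp [ha, hc, hi]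
  have hsplit : ∑ i, f i ^ 2 = (∑ i, a i ^ 2) + (∑ i, c i ^ 2) := by
    rw [← Finset.sum_add_distrib]
    refine Finset.sum_congr rfl fun i _ => ?_
    by_cases hi : Even (i : ℕ) <;> simp [ha, hc, hi]
  rw [hsplit, ← hA, ← hC]
  nlinarith [sq_nonneg ((∑ i, a i) - (∑ i, c i))]

/-- Bounds on the windowed weights `ρᵢ = ‖Fᵢ(J)v₁‖²`, Hastings (section on tridiagonal
matrices): for nonnegative window functions `Fᵢ` with values in `[0,1]` summing to `1`
on the spectrum of the Hermitian `J`, one has `∑ᵢ ρᵢ ≤ 1`; and if windows at distance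
more than one are disjoint (`Fᵢ·Fⱼ = 0` for `|i-j| > 1`) then `∑ᵢ ρᵢ ≥ 1/2`. -/
theorem stmt12 (L n : ℕ) (J : EuclideanSpace ℂ (Fin L) →L[ℂ] EuclideanSpace ℂ (Fin L))
    (hJ : IsSelfAdjoint J)
    (v₁ : EuclideanSpace ℂ (Fin L)) (hv₁ : ‖v₁‖ = 1)
    (F : Fin n → ℝ → ℝ)
    (hF01 : ∀ (i : Fin n) (x : ℝ), F i x ∈ Set.Icc (0 : ℝ) 1)
    (hFsum : ∀ x : ℝ, (∃ v : EuclideanSpace ℂ (Fin L), v ≠ 0 ∧ J v = (x : ℂ) • v) →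
      ∑ i : Fin n, F i x = 1)
    (FJ : Fin n → (EuclideanSpace ℂ (Fin L) →L[ℂ] EuclideanSpace ℂ (Fin L)))
    (hFJ : ∀ (i : Fin n) (v : EuclideanSpace ℂ (Fin L)) (x : ℝ), J v = (x : ℂ) • v →
      FJ i v = ((F i x : ℝ) : ℂ) • v)
    (ρ : Fin n → ℝ) (hρ : ∀ i : Fin n, ρ i = ‖FJ i v₁‖ ^ 2) :
    (∑ i : Fin n, ρ i ≤ 1) ∧
    ((∀ (i j : Fin n) (x : ℝ), 1 < |(i : ℤ) - (j : ℤ)| → F i x * F j x = 0) →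
      1 / 2 ≤ ∑ i : Fin n, ρ i) := by
  classical
  have hL : Module.finrank ℂ (EuclideanSpace ℂ (Fin L)) = L := finrank_euclideanSpace_fin
  have hsym : LinearMap.IsSymmetric
      (J : EuclideanSpace ℂ (Fin L) →ₗ[ℂ] EuclideanSpace ℂ (Fin L)) := hJ.isSymmetric
  set b := hsym.eigenvectorBasis hL with hbdef
  set μ := hsym.eigenvalues hL with hμdef
  have hb : ∀ k, J (b k) = ((μ k : ℝ) : ℂ) • b k := fun k => hsym.apply_eigenvectorBasis hL k
  have hbne : ∀ k, b k ≠ 0 := fun k => b.orthonormal.ne_zero k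
  have hFμ : ∀ k, ∑ i, F i (μ k) = 1 := fun k => hFsum _ ⟨b k, hbne k, hb k⟩
  set c : Fin L → ℂ := fun k => b.repr v₁ k with hcdef
  have hv : ∑ k, c k • b k = v₁ := b.sum_repr v₁
  have hnorm : ∀ d : Fin L → ℂ, ‖∑ k, d k • b k‖ ^ 2 = ∑ k, ‖d k‖ ^ 2 := by
    intro d
    have h1 := b.orthonormal.inner_sum d d Finset.univ
    have h2 : (‖∑ k, d k • b k‖ : ℝ) ^ 2 =
        Complex.re ⟪∑ k, d k • b k, ∑ k, d k • b k⟫_ℂ :=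
      (norm_sq_eq_re_inner (𝕜 := ℂ) _)
    rw [h2, h1, Complex.re_sum]
    refine Finset.sum_congr rfl fun k _ => ?_
    rw [Complex.conj_mul', ← Complex.ofReal_pow, Complex.ofReal_re]
  have hw1 : ∑ k, ‖c k‖ ^ 2 = 1 := by
    have := hnorm c
    rw [hv, hv₁, one_pow] at this
    exact this.symm
  have hρ' : ∀ i, ρ i = ∑ k, F i (μ k) ^ 2 * ‖c k‖ ^ 2 := by
    intro i
    have hFJv : FJ i v₁ = ∑ k, (((F i (μ k) : ℝ) : ℂ) * c k) • b k := by
      conv_lhs => rw [← hv]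
      rw [map_sum]
      refine Finset.sum_congr rfl fun k _ => ?_
      rw [map_smul, hFJ i (b k) (μ k) (hb k), smul_smul, mul_comm]
    rw [hρ i, hFJv, hnorm]
    refine Finset.sum_congr rfl fun k _ => ?_
    rw [norm_mul, mul_pow, Complex.norm_real, Real.norm_eq_abs,
      abs_of_nonneg (hF01 i (μ k)).1]
  have hsumρ : ∑ i, ρ i = ∑ k, (∑ i, F i (μ k) ^ 2) * ‖c k‖ ^ 2 := by
    simp_rw [hρ']
    rw [Finset.sum_comm]
    simp [Finset.sum_mul]
  constructor
  · rw [hsumρ]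
    calc ∑ k, (∑ i, F i (μ k) ^ 2) * ‖c k‖ ^ 2 ≤ ∑ k, 1 * ‖c k‖ ^ 2 := by
          refine Finset.sum_le_sum fun k _ => ?_
          refine mul_le_mul_of_nonneg_right ?_ (by positivity)
          calc ∑ i, F i (μ k) ^ 2 ≤ ∑ i, F i (μ k) := by
                refine Finset.sum_le_sum fun i _ => ?_
                have h := hF01 i (μ k)
                nlinarith [h.1, h.2]
            _ = 1 := hFμ k
      _ = 1 := by simp only [one_mul]; exact hw1
  · intro hd
    rw [hsumρ]
    calc (1 : ℝ) / 2 = ∑ k, (1 / 2) * ‖c k‖ ^ 2 := by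
          rw [← Finset.mul_sum, hw1, mul_one]
      _ ≤ ∑ k, (∑ i, F i (μ k) ^ 2) * ‖c k‖ ^ 2 := by
          refine Finset.sum_le_sum fun k _ => ?_
          refine mul_le_mul_of_nonneg_right ?_ (by positivity)
          exact key_half n (fun i => F i (μ k)) (fun i => (hF01 i _).1) (hFμ k)
            (fun i j h => hd i j (μ k) h)
end

section
/- For Hermitian matrices A, B and t ∈ ℝ, ‖[exp(iBt), A]‖ ≤ |t|·‖[A,B]‖. -/
set_option maxHeartbeats 1000000
set_option synthInstance.maxHeartbeats 400000

open ContinuousLinearMap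

private lemma stmt18_aux {R : Type*} [Ring R] (x a c y : R) (h : c * x = x * c) :
    x * (c * a - a * c) * y = c * x * a * y + x * a * -(c * y) := by
  rw [mul_neg, ← sub_eq_add_neg, h]
  simp only [mul_sub, sub_mul, mul_assoc]

open NormedSpace Complex in
/-- Basic commutator estimate used throughout Hastings:
`‖[exp(iBt), A]‖ ≤ |t| ‖[A,B]‖` for Hermitian `A`, `B`. -/
theorem stmt18 (N : ℕ) (A B : EuclideanSpace ℂ (Fin N) →L[ℂ] EuclideanSpace ℂ (Fin N))
    (hA : IsSelfAdjoint A) (hB : IsSelfAdjoint B) (t : ℝ) :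
    ‖NormedSpace.exp ((Complex.I * (t : ℂ)) • B) * A -
        A * NormedSpace.exp ((Complex.I * (t : ℂ)) • B)‖ ≤
      |t| * ‖A * B - B * A‖ := by
  set C := Complex.I • B with hCdef
  set f : ℝ → (EuclideanSpace ℂ (Fin N) →L[ℂ] EuclideanSpace ℂ (Fin N)) :=
    fun s : ℝ => NormedSpace.exp ((s : ℂ) • C) with hfdef
  have hsmul : ∀ s : ℝ, (s : ℂ) • C = (Complex.I * (s : ℂ)) • B := by
    intro s; rw [hCdef, smul_smul, mul_comm]
  have hmem : ∀ s : ℝ, f s ∈ unitary (EuclideanSpace ℂ (Fin N) →L[ℂ] EuclideanSpace ℂ (Fin N)) := by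
    intro s
    have h2 : IsSelfAdjoint ((s : ℂ) • B) := by
      rw [IsSelfAdjoint, star_smul, hB.star_eq, Complex.star_def, Complex.conj_ofReal]
    have h1 : (s : ℂ) • C = Complex.I • ((s : ℂ) • B) := by
      rw [hCdef, smul_smul, smul_smul, mul_comm]
    rw [hfdef]; simp only; rw [h1]
    let +nondep : NormedAlgebra ℚ (EuclideanSpace ℂ (Fin N) →L[ℂ] EuclideanSpace ℂ (Fin N)) :=
      .restrictScalars ℚ ℂ _
    exact exp_mem_unitary_of_mem_skewAdjoint (h2.smul_mem_skewAdjoint Complex.conj_I)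
  have hd : ∀ s : ℝ, HasDerivAt f (C * f s) s := by
    intro s
    have hg := hasDerivAt_exp_smul_const' (𝕂 := ℂ) C ((s : ℝ) : ℂ)
    have hh : HasDerivAt (fun x : ℝ => (x : ℂ)) (1 : ℂ) s := by
      simpa using (hasDerivAt_id s).ofReal_comp
    have h3 := HasDerivAt.scomp s hg hh
    simpa [Function.comp_def] using! h3
  have hcomm : ∀ s : ℝ, C * f s = f s * C := by
    intro s
    exact (((Commute.refl C).smul_right ((s : ℂ))).exp_right).eq
  -- derivative of the reversed factor
  have hd' : ∀ s : ℝ, HasDerivAt (fun u : ℝ => f (t - u)) (-(C * f (t - s))) s := by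
    intro s
    have hg := hasDerivAt_exp_smul_const' (𝕂 := ℂ) C ((t - s : ℝ) : ℂ)
    have hg2 : HasDerivAt (fun x : ℝ => (x : ℂ)) (1 : ℂ) (t - s) := by
      simpa using (hasDerivAt_id (t - s)).ofReal_comp
    have hh : HasDerivAt (fun u : ℝ => ((t - u : ℝ) : ℂ)) (-1 : ℂ) s := by
      have h0 := HasDerivAt.scomp s hg2 ((hasDerivAt_id s).const_sub t)
      simp only [Function.comp_def] at h0
      norm_num at h0
      simpa using h0
    simpa [Function.comp_def, ← Complex.ofReal_sub] using! HasDerivAt.scomp s hg hh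
  -- the interpolating function
  set G : ℝ → (EuclideanSpace ℂ (Fin N) →L[ℂ] EuclideanSpace ℂ (Fin N)) :=
    fun s => f s * A * f (t - s) with hGdef
  have hdG : ∀ s : ℝ, HasDerivAt G (f s * (C * A - A * C) * f (t - s)) s := by
    intro s
    have h1 : HasDerivAt (fun u : ℝ => f u * A) (C * f s * A) s := (hd s).mul_const A
    have h3 := h1.mul (hd' s)
    convert h3 using 1
    · rfl
    · rfl
    · rfl
    · rfl
    exact stmt18_aux (f s) A C (f (t - s)) (hcomm s)
  have hbound : ∀ s : ℝ, ‖f s * (C * A - A * C) * f (t - s)‖ ≤ ‖A * B - B * A‖ := by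
    intro s
    rw [mul_assoc, CStarRing.norm_mem_unitary_mul _ (hmem s),
      CStarRing.norm_mul_mem_unitary _ (hmem (t - s))]
    have h1 : C * A - A * C = Complex.I • (B * A - A * B) := by
      rw [hCdef, smul_mul_assoc, mul_smul_comm, smul_sub]
    have h2 := norm_smul Complex.I (B * A - A * B)
    rw [Complex.norm_I, one_mul] at h2
    rw [h1, h2, ← neg_sub (A * B) (B * A), norm_neg]
  have key : ‖G t - G 0‖ ≤ ‖A * B - B * A‖ * ‖t - 0‖ :=
    (convex_univ).norm_image_sub_le_of_norm_hasDerivWithin_le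
      (fun x _ => (hdG x).hasDerivWithinAt) (fun x _ => hbound x)
      (Set.mem_univ 0) (Set.mem_univ t)
  have hf0 : f 0 = 1 := by
    show NormedSpace.exp (((0 : ℝ) : ℂ) • C) = 1
    have h : ((0 : ℝ) : ℂ) • C = 0 := by push_cast; exact zero_smul ℂ C
    rw [h, NormedSpace.exp_zero]
  have hft : f t = NormedSpace.exp ((Complex.I * (t : ℂ)) • B) := by
    show NormedSpace.exp (((t : ℝ) : ℂ) • C) = _
    rw [hsmul t]
  have hGt : G t = NormedSpace.exp ((Complex.I * (t : ℂ)) • B) * A := by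
    show f t * A * f (t - t) = _
    rw [sub_self, hf0, mul_one, hft]
  have hG0 : G 0 = A * NormedSpace.exp ((Complex.I * (t : ℂ)) • B) := by
    show f 0 * A * f (t - 0) = _
    rw [sub_zero, hf0, one_mul, hft]
  rw [hGt, hG0] at key
  calc _ ≤ ‖A * B - B * A‖ * ‖t - 0‖ := key
    _ = |t| * ‖A * B - B * A‖ := by rw [sub_zero, Real.norm_eq_abs, mul_comm]
end
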